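/- arXiv:2401.05608 — 6 statements merged into one kernel-verified Lean document; each statement's English description precedes it below -/
import Mathlib

section
/- Let B be a complete normed ring that is a normed ℝ-algebra, and let a : B with ‖a‖ < 1. Then the family n ↦ Ring.choose (1/2 : ℝ) n • a^n is summable, and its sum S := ∑'_{n : ℕ} Ring.choose (1/2 : ℝ) n • a^n satisfies S * S = 1 + a. -/
open Finset Polynomial

private lemma ring_choose_real_succ (r : ℝ) (n : ℕ) :
    Ring.choose r (n + 1) = Ring.choose r n * (r - n) / (n + 1) := by
  have h1 := Ring.descPochhammer_eq_factorial_smul_choose (R := ℝ) r (n + 1)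
  have h2 := Ring.descPochhammer_eq_factorial_smul_choose (R := ℝ) r n
  rw [descPochhammer_succ_right, smeval_mul, h2, smeval_sub, smeval_X, smeval_natCast] at h1
  simp only [nsmul_eq_mul, pow_one, pow_zero, mul_one, Nat.factorial_succ, Nat.cast_mul,
    Nat.cast_add, Nat.cast_one] at h1
  have hfac : (n.factorial : ℝ) ≠ 0 := Nat.cast_ne_zero.mpr n.factorial_ne_zero
  have hn1 : ((n : ℝ) + 1) ≠ 0 := by positivity
  rw [eq_div_iff hn1]
  apply mul_left_cancel₀ hfac
  linear_combination -h1

private lemma ring_choose_half_abs_le_one (n : ℕ) :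
    |Ring.choose (1 / 2 : ℝ) n| ≤ 1 := by
  induction n with
  | zero => simp [Ring.choose_zero_right]
  | succ n ih =>
    rw [ring_choose_real_succ, abs_div, abs_mul]
    have hn1 : (0 : ℝ) < n + 1 := by positivity
    have habs : |(1 / 2 : ℝ) - n| ≤ (n : ℝ) + 1 := by
      rw [abs_le]; constructor <;> [skip; skip] <;> push_cast <;> nlinarith [Nat.cast_nonneg (α := ℝ) n]
    rw [abs_of_pos hn1, div_le_one hn1]
    calc |Ring.choose (1 / 2 : ℝ) n| * |(1 / 2 : ℝ) - n| ≤ 1 * ((n : ℝ) + 1) :=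
          mul_le_mul ih habs (abs_nonneg _) one_pos.le
      _ = (n : ℝ) + 1 := one_mul _

/-- **The binomial series is a square root of `1 + a`.**
In a complete normed `ℝ`-algebra, for `‖a‖ < 1` the series
`∑ Ring.choose (1/2) n • a^n` is summable and its sum `S` satisfies `S * S = 1 + a`. -/
theorem binomialSeries_half_sq {B : Type*} [NormedRing B] [CompleteSpace B]
    [NormedAlgebra ℝ B] (a : B) (ha : ‖a‖ < 1) :
    Summable (fun n : ℕ => Ring.choose (1 / 2 : ℝ) n • a ^ n) ∧
      (∑' n : ℕ, Ring.choose (1 / 2 : ℝ) n • a ^ n) *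
          (∑' n : ℕ, Ring.choose (1 / 2 : ℝ) n • a ^ n) = 1 + a := by
  set f : ℕ → B := fun n => Ring.choose (1 / 2 : ℝ) n • a ^ n with hf
  have hM : (0 : ℝ) ≤ max ‖(1 : B)‖ 1 := le_trans zero_le_one (le_max_right _ _)
  have hbound : ∀ n : ℕ, ‖f n‖ ≤ max ‖(1 : B)‖ 1 * ‖a‖ ^ n := by
    intro n
    rw [hf, norm_smul]
    have h1 : ‖a ^ n‖ ≤ max ‖(1 : B)‖ 1 * ‖a‖ ^ n := by
      cases n with
      | zero => simpa using le_max_left ‖(1 : B)‖ 1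
      | succ n =>
        calc ‖a ^ (n + 1)‖ ≤ ‖a‖ ^ (n + 1) := norm_pow_le' a n.succ_pos
          _ ≤ max ‖(1 : B)‖ 1 * ‖a‖ ^ (n + 1) := by
              nlinarith [pow_nonneg (norm_nonneg a) (n + 1), le_max_right ‖(1 : B)‖ 1]
    calc ‖Ring.choose (1 / 2 : ℝ) n‖ * ‖a ^ n‖ ≤ 1 * (max ‖(1 : B)‖ 1 * ‖a‖ ^ n) :=
        mul_le_mul (ring_choose_half_abs_le_one n) h1 (norm_nonneg _) one_pos.le
      _ = max ‖(1 : B)‖ 1 * ‖a‖ ^ n := one_mul _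
  have hnorm : Summable fun n => ‖f n‖ :=
    Summable.of_nonneg_of_le (fun n => norm_nonneg _) hbound
      ((summable_geometric_of_lt_one (norm_nonneg a) ha).mul_left _)
  have hsum : Summable f := hnorm.of_norm
  refine ⟨hsum, ?_⟩
  rw [tsum_mul_tsum_eq_tsum_sum_antidiagonal_of_summable_norm hnorm hnorm]
  have hinner : ∀ n : ℕ, (∑ kl ∈ antidiagonal n, f kl.1 * f kl.2)
      = ((Nat.choose 1 n : ℝ)) • a ^ n := by
    intro n
    have : ∀ kl ∈ antidiagonal n, f kl.1 * f kl.2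
        = (Ring.choose (1 / 2 : ℝ) kl.1 * Ring.choose (1 / 2 : ℝ) kl.2) • a ^ n := by
      intro kl hkl
      rw [hf]
      rw [smul_mul_assoc, mul_smul_comm, smul_smul, ← pow_add,
        (Finset.HasAntidiagonal.mem_antidiagonal.mp hkl)]
    rw [Finset.sum_congr rfl this, ← Finset.sum_smul]
    congr 1
    have hv := (Ring.add_choose_eq (r := (1 / 2 : ℝ)) (s := (1 / 2 : ℝ)) n (Commute.all _ _)).symm
    rw [hv]
    norm_num
    rw [show ((1 : ℝ)) = ((1 : ℕ) : ℝ) by norm_num, Ring.choose_natCast]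
  rw [tsum_congr hinner]
  rw [tsum_eq_sum (s := {0, 1}) (by
    intro n hn
    have h2 : 2 ≤ n := by
      rcases n with _ | _ | n
      · simp at hn
      · simp at hn
      · omega
    rw [Nat.choose_eq_zero_of_lt (by omega)]
    simp)]
  rw [Finset.sum_pair (by norm_num)]
  simp
end

section
/- Let B be a complete normed ring that is a normed ℝ-algebra, and let a : B with ‖a‖ < 1. Then the two binomial series S := ∑'_{n : ℕ} Ring.choose (1/2 : ℝ) n • a^n and F := ∑'_{n : ℕ} Ring.choose (−1/2 : ℝ) n • a^n are both summable and are mutually inverse: S * F = 1 and F * S = 1. -/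
/-!
The coefficients of both series are bounded by `1`: the recursion
`choose r (n + 1) = choose r n * (r - n) / (n + 1)` with `‖r - n‖ ≤ n + 1` keeps them there.
Hence both series converge absolutely for `‖a‖ < 1`, and their Cauchy product is, by the
Chu–Vandermonde identity, the binomial series of exponent `1/2 + (-1/2) = 0`, which is `1`.
-/

open Finset Polynomial

theorem Ring.choose_succ_eq_mul_div {K : Type*} [Field K] [CharZero K] (r : K) (n : ℕ) :
    Ring.choose r (n + 1) = Ring.choose r n * (r - n) / (n + 1) := by
  rw [Ring.choose_eq_smul, Ring.choose_eq_smul, descPochhammer_succ_right, smeval_mul,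
    smeval_sub, smeval_X, smeval_natCast, Nat.factorial_succ]
  simp only [smul_eq_mul, Nat.cast_mul, Nat.cast_succ, pow_one, pow_zero, nsmul_eq_mul, mul_one]
  field_simp

theorem norm_ringChoose_le_one {𝕜 : Type*} [RCLike 𝕜] {r : 𝕜} (hr : ‖r‖ ≤ 1) (n : ℕ) :
    ‖Ring.choose r n‖ ≤ 1 := by
  induction n with
  | zero => simp
  | succ n ih =>
    have hsub : ‖r - n‖ ≤ n + 1 := by
      calc ‖r - n‖ ≤ ‖r‖ + ‖(n : 𝕜)‖ := norm_sub_le _ _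
        _ ≤ n + 1 := by rw [RCLike.norm_natCast]; linarith
    have hsucc : ‖(n + 1 : 𝕜)‖ = n + 1 := by
      exact_mod_cast RCLike.norm_natCast (K := 𝕜) (n + 1)
    rw [Ring.choose_succ_eq_mul_div, norm_div, norm_mul, hsucc, div_le_one (by positivity)]
    simpa using mul_le_mul ih hsub (norm_nonneg _) zero_le_one

theorem summable_norm_smul_pow_of_norm_le {𝕜 B : Type*} [NormedField 𝕜] [NormedRing B]
    [NormedAlgebra 𝕜 B] {c : ℕ → 𝕜} {C : ℝ} (hc : ∀ n, ‖c n‖ ≤ C) {a : B} (ha : ‖a‖ < 1) :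
    Summable fun n ↦ ‖c n • a ^ n‖ :=
  .of_nonneg_of_le (fun _ ↦ norm_nonneg _)
    (fun n ↦ (norm_smul_le _ _).trans (mul_le_mul_of_nonneg_right (hc n) (norm_nonneg _)))
    ((summable_norm_geometric_of_norm_lt_one ha).mul_left C)

section BinomialSeries

variable {𝕜 B : Type*} [NormedField 𝕜] [CharZero 𝕜] [NormedRing B] [NormedAlgebra 𝕜 B]

theorem tsum_choose_zero_smul_pow (a : B) : ∑' n, Ring.choose (0 : 𝕜) n • a ^ n = 1 := by
  rw [tsum_eq_single 0 fun n hn ↦ by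
    rw [Ring.choose_zero_pos 𝕜 (Nat.pos_of_ne_zero hn), zero_smul]]
  simp

theorem sum_antidiagonal_choose_smul_pow_mul_choose_smul_pow (r s : 𝕜) (a : B) (n : ℕ) :
    ∑ kl ∈ antidiagonal n, (Ring.choose r kl.1 • a ^ kl.1) * (Ring.choose s kl.2 • a ^ kl.2) =
      Ring.choose (r + s) n • a ^ n := by
  rw [Ring.add_choose_eq n (Commute.all r s), sum_smul]
  refine sum_congr rfl fun kl hkl ↦ ?_
  rw [smul_mul_smul_comm, ← pow_add, mem_antidiagonal.mp hkl]

theorem tsum_choose_smul_pow_mul_tsum [CompleteSpace B] {r s : 𝕜} {a : B}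
    (hr : Summable fun n ↦ ‖Ring.choose r n • a ^ n‖)
    (hs : Summable fun n ↦ ‖Ring.choose s n • a ^ n‖) :
    (∑' n, Ring.choose r n • a ^ n) * (∑' n, Ring.choose s n • a ^ n) =
      ∑' n, Ring.choose (r + s) n • a ^ n := by
  rw [tsum_mul_tsum_eq_tsum_sum_antidiagonal_of_summable_norm hr hs]
  exact tsum_congr (sum_antidiagonal_choose_smul_pow_mul_choose_smul_pow r s a)

end BinomialSeries

/-- **Vierbein and inverse vierbein series are mutually inverse.**
In a complete normed `ℝ`-algebra, for `‖a‖ < 1` the binomial series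
`S = ∑ Ring.choose (1/2) n • a^n` and `F = ∑ Ring.choose (−1/2) n • a^n` are both
summable and satisfy `S * F = 1` and `F * S = 1`. -/
theorem binomialSeries_half_mul_negHalf {B : Type*} [NormedRing B] [CompleteSpace B]
    [NormedAlgebra ℝ B] (a : B) (ha : ‖a‖ < 1) :
    Summable (fun n : ℕ => Ring.choose (1 / 2 : ℝ) n • a ^ n) ∧
    Summable (fun n : ℕ => Ring.choose (-1 / 2 : ℝ) n • a ^ n) ∧
      (∑' n : ℕ, Ring.choose (1 / 2 : ℝ) n • a ^ n) *
          (∑' n : ℕ, Ring.choose (-1 / 2 : ℝ) n • a ^ n) = 1 ∧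
      (∑' n : ℕ, Ring.choose (-1 / 2 : ℝ) n • a ^ n) *
          (∑' n : ℕ, Ring.choose (1 / 2 : ℝ) n • a ^ n) = 1 := by
  have hS := summable_norm_smul_pow_of_norm_le
    (norm_ringChoose_le_one (r := (1 / 2 : ℝ)) (by norm_num)) ha
  have hF := summable_norm_smul_pow_of_norm_le
    (norm_ringChoose_le_one (r := (-1 / 2 : ℝ)) (by norm_num)) ha
  refine ⟨hS.of_norm, hF.of_norm, ?_, ?_⟩
  · rw [tsum_choose_smul_pow_mul_tsum hS hF, show (1 / 2 : ℝ) + -1 / 2 = 0 by norm_num,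
      tsum_choose_zero_smul_pow]
  · rw [tsum_choose_smul_pow_mul_tsum hF hS, show (-1 / 2 : ℝ) + 1 / 2 = 0 by norm_num,
      tsum_choose_zero_smul_pow]
end

section
/- Let ι be a nonempty finite type and A : Matrix ι ι ℝ. Then for every n ≥ 1 the volume-factor coefficients satisfy the recursion 2n · d_n(A) = ∑_{k=1}^{n} (−1)^{k−1} · tr(A^k) · d_{n−k}(A). -/
/-!
Both sides are coefficients of the power series `D = exp (L / 2)`, where
`L = ∑_{k ≥ 1} (-1)^(k+1) tr(A^k) X^k / k` is the expansion of `log det (1 + X A)`: the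
coefficient of `X^n` in `L^m` is a sum over the compositions of `n` of length `m`, which turns
the definition of `d_n(A)` into `coeff n D`. The chain rule gives `D' = D L' / 2`, and since
`X L' = ∑_{k ≥ 1} (-1)^(k-1) tr(A^k) X^k`, comparing coefficients of `X^n` in `2 X D' = D · X L'`
is the recursion.
-/

/-- The volume-factor coefficients `d_n(A)`: `d_0(A) = 1` and, for `n ≥ 1`,
`d_n(A) = (−1)^n ∑_{m=1}^{n} (1/m!) (−1/2)^m ∑_{k_1+⋯+k_m=n} ∏_i tr(A^{k_i})/k_i`,
the inner sum running over ordered tuples of positive integers (compositions of `n`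
of length `m`). -/
noncomputable def volCoeff {ι : Type*} [Fintype ι] [DecidableEq ι] (A : Matrix ι ι ℝ) : ℕ → ℝ
  | 0 => 1
  | (n + 1) =>
      (-1 : ℝ) ^ (n + 1) *
        ∑ m ∈ Finset.Icc 1 (n + 1),
          (1 / (Nat.factorial m : ℝ)) * (-(1 : ℝ) / 2) ^ m *
            ∑ c ∈ Finset.univ.filter (fun c : Composition (n + 1) => c.length = m),
              ∏ i : Fin c.length, ((A ^ c.blocksFun i).trace / (c.blocksFun i : ℝ))

open Finset PowerSeries

namespace PowerSeries

theorem coeff_pow_eq_sum_compositions {R : Type*} [CommSemiring R] {φ : R⟦X⟧}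
    (hφ : constantCoeff φ = 0) (m n : ℕ) :
    coeff n (φ ^ m) = ∑ c ∈ univ.filter (fun c : Composition n => c.length = m),
      ∏ i : Fin c.length, coeff (c.blocksFun i) φ := by
  rw [← Fin.prod_const m φ, coeff_prod]
  symm
  have blocks_eq (c : Composition n) (hc : c.length = m) :
      c.blocks = List.ofFn (c.blocksFun ∘ Fin.cast hc.symm) := by
    rw [← c.ofFn_blocksFun, List.ofFn_congr hc.symm]
    rfl
  have prod_eq (c : Composition n) (hc : c.length = m) :
      ∏ i : Fin c.length, coeff (c.blocksFun i) φ =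
        ∏ i : Fin m, coeff (c.blocksFun (Fin.cast hc.symm i)) φ :=
    (Fin.prod_congr' (fun i => coeff (c.blocksFun i) φ) _).symm
  -- Compositions of length `m` are the tuples of `finsuppAntidiag univ n` without zero entries;
  -- the other tuples contribute `0` because `constantCoeff φ = 0`.
  refine sum_bij_ne_zero
    (fun c hc _ => Finsupp.equivFunOnFinite.symm
      (c.blocksFun ∘ Fin.cast (mem_filter.1 hc).2.symm)) ?_ ?_ ?_ ?_
  · intro c hc _
    refine mem_finsuppAntidiag.2 ⟨?_, by simp⟩
    simpa using (Fin.sum_congr' c.blocksFun (mem_filter.1 hc).2.symm).trans c.sum_blocksFun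
  · intro c hc _ c' hc' _ h
    apply Composition.ext
    rw [blocks_eq c (mem_filter.1 hc).2, blocks_eq c' (mem_filter.1 hc').2]
    exact congrArg List.ofFn (Finsupp.equivFunOnFinite.symm.injective h)
  · intro l hl hne
    have hpos (i : Fin m) : 0 < l i := Nat.pos_of_ne_zero fun h0 =>
      hne (prod_eq_zero (mem_univ i) (by rw [h0, coeff_zero_eq_constantCoeff_apply, hφ]))
    let c : Composition n :=
      ⟨List.ofFn l, by simpa [List.mem_ofFn] using hpos,
        by simpa [List.sum_ofFn] using (mem_finsuppAntidiag.1 hl).1⟩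
    have hc : c.length = m := List.length_ofFn
    have hcl (i : Fin m) : c.blocksFun (Fin.cast hc.symm i) = l i := List.get_ofFn l _
    refine ⟨c, mem_filter.2 ⟨mem_univ c, hc⟩, ?_, ?_⟩
    · simpa only [prod_eq c hc, hcl] using hne
    · ext i
      exact hcl i
  · intro c hc _
    exact prod_eq c (mem_filter.1 hc).2

theorem coeff_exp_subst {A : Type*} [CommRing A] [Algebra ℚ A] {a : A⟦X⟧}
    (ha : constantCoeff a = 0) (n : ℕ) :
    coeff n ((exp A).subst a) =
      ∑ m ∈ range (n + 1), algebraMap ℚ A (1 / m.factorial) * coeff n (a ^ m) := by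
  rw [coeff_subst' (HasSubst.of_constantCoeff_zero' ha),
    finsum_eq_sum_of_support_subset _ (s := range (n + 1))]
  · simp only [coeff_exp, smul_eq_mul]
  · refine Function.support_subset_iff'.2 fun m hm => ?_
    have hnm : (n : ℕ∞) < m := Nat.cast_lt.2 (by simpa using hm)
    rw [coeff_of_lt_order n (hnm.trans_le (le_order_pow_of_constantCoeff_eq_zero m ha)),
      smul_zero]

theorem derivative_exp_subst {A : Type*} [CommRing A] [Algebra ℚ A] {a : A⟦X⟧}
    (ha : constantCoeff a = 0) :
    d⁄dX A ((exp A).subst a) = (exp A).subst a * d⁄dX A a := by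
  rw [derivative_subst (HasSubst.of_constantCoeff_zero' ha), derivative_exp]

end PowerSeries

theorem Finset.sum_Icc_one_eq_sum_range {M : Type*} [AddCommMonoid M] (f : ℕ → M) (n : ℕ) :
    ∑ m ∈ Icc 1 n, f m = ∑ m ∈ range n, f (m + 1) := by
  rw [range_eq_Ico, sum_Ico_add', ← Ico_add_one_right_eq_Icc]

namespace Matrix

variable {ι : Type*} [Fintype ι] [DecidableEq ι] (A : Matrix ι ι ℝ)

/-- The expansion of `log det (1 + X A)`; its constant coefficient is `0` since `x / 0 = 0`. -/
noncomputable def logDetSeries : ℝ⟦X⟧ :=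
  mk fun k => (-1) ^ (k + 1) * (A ^ k).trace / k

/-- The volume factor `√(det (1 + X A))`. -/
noncomputable def volSeries : ℝ⟦X⟧ :=
  (exp ℝ).subst ((2⁻¹ : ℝ) • A.logDetSeries)

theorem constantCoeff_logDetSeries : constantCoeff A.logDetSeries = 0 := by
  simp [logDetSeries]

theorem logDetSeries_eq_smul_rescale :
    A.logDetSeries = (-1 : ℝ) • rescale (-1) (mk fun k => (A ^ k).trace / k) := by
  ext k
  simp only [logDetSeries, coeff_mk, coeff_smul, coeff_rescale]
  ring

theorem coeff_logDetSeries_pow (m n : ℕ) :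
    coeff n (A.logDetSeries ^ m) = (-1) ^ (m + n) *
      ∑ c ∈ univ.filter (fun c : Composition n => c.length = m),
        ∏ i : Fin c.length, (A ^ c.blocksFun i).trace / c.blocksFun i := by
  rw [logDetSeries_eq_smul_rescale, smul_pow, ← map_pow, coeff_smul, coeff_rescale,
    coeff_pow_eq_sum_compositions (by simp), smul_eq_mul, pow_add, mul_assoc]
  simp only [coeff_mk]

theorem coeff_derivative_logDetSeries (k : ℕ) :
    coeff k (d⁄dX ℝ A.logDetSeries) = (-1) ^ k * (A ^ (k + 1)).trace := by
  rw [coeff_derivative, logDetSeries, coeff_mk]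
  push_cast
  field_simp
  ring

theorem volCoeff_eq_coeff_volSeries (n : ℕ) : volCoeff A n = coeff n A.volSeries := by
  rw [volSeries, coeff_exp_subst (by simp [constantCoeff_logDetSeries])]
  cases n with
  | zero => simp [volCoeff]
  | succ n =>
    rw [volCoeff, sum_range_succ', sum_Icc_one_eq_sum_range, mul_sum]
    simp only [pow_zero, coeff_one, add_eq_zero, one_ne_zero, and_false, if_false, mul_zero,
      add_zero]
    refine sum_congr rfl fun m _ => ?_
    simp only [smul_pow, coeff_smul, smul_eq_mul, coeff_logDetSeries_pow, map_div₀, map_one,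
      map_natCast, div_pow, inv_pow]
    ring

theorem derivative_volSeries :
    d⁄dX ℝ A.volSeries = A.volSeries * ((2⁻¹ : ℝ) • d⁄dX ℝ A.logDetSeries) := by
  rw [volSeries, derivative_exp_subst (by simp [constantCoeff_logDetSeries]),
    Derivation.map_smul]

end Matrix

theorem volCoeff_recursion_general {ι : Type*} [Fintype ι] [DecidableEq ι]
    (A : Matrix ι ι ℝ) (n : ℕ) :
    2 * (n : ℝ) * volCoeff A n =
      ∑ k ∈ Finset.Icc 1 n, (-1 : ℝ) ^ (k - 1) * (A ^ k).trace * volCoeff A (n - k) := by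
  cases n with
  | zero => simp
  | succ n =>
    have h := congrArg (coeff n) A.derivative_volSeries
    rw [mul_comm A.volSeries, coeff_derivative, coeff_mul,
      Nat.sum_antidiagonal_eq_sum_range_succ fun i j =>
        coeff i ((2⁻¹ : ℝ) • d⁄dX ℝ A.logDetSeries) * coeff j A.volSeries] at h
    simp only [coeff_smul, smul_eq_mul, A.coeff_derivative_logDetSeries,
      ← A.volCoeff_eq_coeff_volSeries] at h
    rw [sum_Icc_one_eq_sum_range, mul_assoc, mul_comm _ (volCoeff A _), Nat.cast_succ, h,
      mul_sum]
    refine sum_congr rfl fun k _ => ?_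
    simp only [Nat.add_sub_cancel, Nat.add_sub_add_right]
    ring

/-- **Recursion for the volume-factor coefficients (Theorem 1).**
For every `n ≥ 1`, `2n · d_n(A) = ∑_{k=1}^{n} (−1)^{k−1} tr(A^k) d_{n−k}(A)`. -/
theorem volCoeff_recursion {ι : Type*} [Fintype ι] [Nonempty ι] [DecidableEq ι]
    (A : Matrix ι ι ℝ) (n : ℕ) (hn : 1 ≤ n) :
    2 * (n : ℝ) * volCoeff A n =
      ∑ k ∈ Finset.Icc 1 n, (-1 : ℝ) ^ (k - 1) * (A ^ k).trace * volCoeff A (n - k) :=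
  volCoeff_recursion_general A n
end

section
/- Let ι be a nonempty finite type, A : Matrix ι ι ℝ, and let c : ℕ → ℝ satisfy c 0 = 1 and, for every n ≥ 1, c n = (1/(2n)) · ∑_{k=1}^{n} (−1)^{k−1} · tr(A^k) · c (n−k). Then for every t : ℝ with |t| · ‖A‖ < 1 in the ℓ² operator norm, the family n ↦ c n · t^n has sum Real.sqrt (det (1 + t • A)). -/
open scoped Matrix.Norms.L2Operator


open Filter Finset Matrix
open scoped Matrix.Norms.L2Operator

namespace SqrtDetAux

/-- auxiliary sequence dominating the coefficients -/
noncomputable def u (a : ℝ) : ℕ → ℝ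
  | 0 => 1
  | n + 1 => u a n * ((n : ℝ) + a) / ((n : ℝ) + 1)

lemma u_pos {a : ℝ} (ha : 0 < a) : ∀ n, 0 < u a n := by
  intro n
  induction n with
  | zero => norm_num [u]
  | succ n ih =>
    have h1 : (0:ℝ) < (n : ℝ) + a := by positivity
    have h2 : (0:ℝ) < (n : ℝ) + 1 := by positivity
    exact div_pos (mul_pos ih h1) h2

lemma sum_u {a : ℝ} (ha : 0 < a) : ∀ n : ℕ, a * ∑ j ∈ range n, u a j = n * u a n := by
  intro n
  induction n with
  | zero => simp
  | succ n ih =>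
    rw [Finset.sum_range_succ, mul_add, ih]
    have h2 : ((n:ℝ) + 1) ≠ 0 := by positivity
    push_cast
    rw [u]
    field_simp

lemma summable_u_aux {a : ℝ} (ha : 0 < a) {x : ℝ} (hx : 0 ≤ x) (hx1 : x < 1) :
    Summable (fun n : ℕ => ((n : ℝ) + 1) * u a n * x ^ n) := by
  rcases eq_or_lt_of_le hx with h0 | h0
  · apply summable_of_ne_finset_zero (s := {0})
    intro n hn
    simp only [Finset.mem_singleton] at hn
    rw [← h0, zero_pow hn, mul_zero]
  · apply summable_of_ratio_test_tendsto_lt_one hx1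
    · filter_upwards with n
      have := u_pos ha n
      positivity
    · have key : ∀ n : ℕ, ‖((n:ℝ) + 1 + 1) * u a (n+1) * x ^ (n+1)‖ / ‖((n:ℝ) + 1) * u a n * x ^ n‖
          = (((n:ℝ) + 2) / ((n:ℝ) + 1)) * ((((n:ℝ) + a)) / ((n:ℝ) + 1)) * x := by
        intro n
        have hu := u_pos ha n
        have hu1 := u_pos ha (n+1)
        have hxp : (0:ℝ) < x ^ n := pow_pos h0 n
        rw [Real.norm_of_nonneg (by positivity), Real.norm_of_nonneg (by positivity)]
        rw [u, pow_succ]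
        field_simp
        ring
      have h1 : Tendsto (fun n : ℕ => ((n:ℝ) + 2) / ((n:ℝ) + 1)) atTop (nhds 1) := by
        have : ∀ n : ℕ, ((n:ℝ) + 2) / ((n:ℝ) + 1) = 1 + 1 / ((n:ℝ) + 1) := by
          intro n
          have : ((n:ℝ) + 1) ≠ 0 := by positivity
          field_simp
          ring
        rw [funext this]
        have := tendsto_one_div_add_atTop_nhds_zero_nat (𝕜 := ℝ)
        simpa using tendsto_const_nhds.add this
      have h2 : Tendsto (fun n : ℕ => ((n:ℝ) + a) / ((n:ℝ) + 1)) atTop (nhds 1) := by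
        have : ∀ n : ℕ, ((n:ℝ) + a) / ((n:ℝ) + 1) = 1 + (a - 1) * (1 / ((n:ℝ) + 1)) := by
          intro n
          have : ((n:ℝ) + 1) ≠ 0 := by positivity
          field_simp
          ring
        rw [funext this]
        have h0' := tendsto_one_div_add_atTop_nhds_zero_nat (𝕜 := ℝ)
        have : Tendsto (fun n : ℕ => 1 + (a - 1) * (1 / ((n:ℝ) + 1))) atTop (nhds (1 + (a-1) * 0)) :=
          tendsto_const_nhds.add (tendsto_const_nhds.mul h0')
        simpa using this
      have := (h1.mul h2).mul_const x
      rw [one_mul, one_mul] at this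
      refine Tendsto.congr (fun n => ?_) this
      rw [← key n]
      push_cast
      norm_num
  

lemma summable_zero_pow (v : ℕ → ℝ) : Summable (fun n : ℕ => v n * (0:ℝ) ^ n) := by
  apply summable_of_ne_finset_zero (s := {0})
  intro n hn
  simp only [Finset.mem_singleton] at hn
  rw [zero_pow hn, mul_zero]

section PS

variable {v : ℕ → ℝ} {r : ℝ}
  (hs : ∀ x : ℝ, 0 ≤ x → x < r → Summable (fun n : ℕ => ((n:ℝ)+1) * |v n| * x ^ n))

include hs

lemma ps_summable {t : ℝ} (ht : |t| < r) : Summable (fun n : ℕ => v n * t ^ n) := by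
  refine Summable.of_norm ?_
  refine (hs |t| (abs_nonneg t) ht).of_nonneg_of_le (fun n => norm_nonneg _) (fun n => ?_)
  rw [norm_mul, norm_pow, Real.norm_eq_abs, Real.norm_eq_abs]
  calc |v n| * |t| ^ n ≤ 1 * (((n:ℝ)+1) * (|v n| * |t| ^ n)) := by
        rw [one_mul]
        refine le_mul_of_one_le_left (by positivity) (by push_cast; linarith [Nat.cast_nonneg (α := ℝ) n])
    _ = ((n:ℝ)+1) * |v n| * |t| ^ n := by ring

omit hs in
lemma ps_deriv_bound {t : ℝ} {x' : ℝ} (h0 : 0 < x') (htx : |t| < x') :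
    ∀ n : ℕ, ‖v n * ((n:ℝ) * t ^ (n-1))‖ ≤ ((n:ℝ)+1) * |v n| * x' ^ n / x' := by
  intro n
  rw [Real.norm_eq_abs]
  match n with
  | 0 => simp; positivity
  | m+1 =>
    have h1 : |t| ^ m ≤ x' ^ m := pow_le_pow_left₀ (abs_nonneg t) htx.le m
    have key : |v (m+1) * ((((m+1):ℕ):ℝ) * t ^ ((m+1)-1))| = |v (m+1)| * (((m:ℝ)+1) * |t| ^ m) := by
      rw [abs_mul, abs_mul, abs_pow, Nat.add_sub_cancel]
      rw [abs_of_nonneg (by positivity : (0:ℝ) ≤ ((m+1 : ℕ):ℝ))]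
      push_cast
      ring
    rw [key, pow_succ]
    have hxx : ((((m+1):ℕ):ℝ)+1) * |v (m+1)| * (x' ^ m * x') / x' = ((m:ℝ)+1+1) * |v (m+1)| * x' ^ m := by
      push_cast
      field_simp
    rw [hxx]
    have h2 : |v (m+1)| * (((m:ℝ)+1) * |t| ^ m) ≤ |v (m+1)| * (((m:ℝ)+1+1) * x' ^ m) := by
      apply mul_le_mul_of_nonneg_left _ (abs_nonneg _)
      have := pow_nonneg (abs_nonneg t) m
      nlinarith
    linarith [h2]

lemma ps_hasDerivAt {t : ℝ} (ht : |t| < r) :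
    HasDerivAt (fun s : ℝ => ∑' n : ℕ, v n * s ^ n)
      (∑' n : ℕ, v n * ((n:ℝ) * t ^ (n-1))) t := by
  set x' := (|t| + r)/2 with hx'
  have h0t : (0:ℝ) ≤ |t| := abs_nonneg t
  have hx0 : 0 < x' := by rw [hx']; linarith
  have htx : |t| < x' := by rw [hx']; linarith
  have hx'r : x' < r := by rw [hx']; linarith
  refine hasDerivAt_tsum_of_isPreconnected
    (u := fun n : ℕ => ((n:ℝ)+1) * |v n| * x' ^ n / x')
    (g := fun (n : ℕ) (y : ℝ) => v n * y ^ n)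
    (g' := fun (n : ℕ) (y : ℝ) => v n * ((n:ℝ) * y ^ (n-1)))
    (y₀ := 0)
    ?_ Metric.isOpen_ball ((convex_ball (0:ℝ) x').isPreconnected) ?_ ?_ ?_ ?_ ?_
  · exact ((hs x' hx0.le hx'r).div_const x')
  · intro n y _
    exact (hasDerivAt_pow n y).const_mul (v n)
  · intro n y hy
    rw [mem_ball_iff_norm, sub_zero, Real.norm_eq_abs] at hy
    exact ps_deriv_bound hx0 hy n
  · rw [mem_ball_iff_norm, sub_zero]
    simpa using hx0
  · exact summable_zero_pow v
  · rw [mem_ball_iff_norm, sub_zero, Real.norm_eq_abs]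
    exact htx

lemma ps_deriv_summable {t : ℝ} (ht : |t| < r) :
    Summable (fun n : ℕ => v n * ((n:ℝ) * t ^ (n-1))) := by
  set x' := (|t| + r)/2 with hx'
  have h0t : (0:ℝ) ≤ |t| := abs_nonneg t
  have hx0 : 0 < x' := by rw [hx']; linarith
  have htx : |t| < x' := by rw [hx']; linarith
  have hx'r : x' < r := by rw [hx']; linarith
  refine Summable.of_norm ?_
  refine ((hs x' hx0.le hx'r).div_const x').of_nonneg_of_le (fun n => norm_nonneg _) ?_
  intro n
  exact ps_deriv_bound hx0 htx n

lemma ps_deriv_shift {t : ℝ} (ht : |t| < r) :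
    ∑' n : ℕ, v n * ((n:ℝ) * t ^ (n-1)) = ∑' n : ℕ, ((n:ℝ)+1) * v (n+1) * t ^ n := by
  rw [Summable.tsum_eq_zero_add (ps_deriv_summable hs ht)]
  simp only [Nat.cast_zero, zero_mul, mul_zero, zero_add, pow_zero]
  congr 1
  ext n
  push_cast [Nat.add_sub_cancel]
  ring

end PS

variable {ι : Type*} [Fintype ι] [DecidableEq ι]

lemma coord_abs_le (y : EuclideanSpace ℝ ι) (i : ι) : |y i| ≤ ‖y‖ := by
  rw [EuclideanSpace.norm_eq]
  have h1 : |y i| = Real.sqrt (‖y i‖ ^ 2) := by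
    rw [Real.sqrt_sq_eq_abs, Real.norm_eq_abs, abs_abs]
  rw [h1]
  apply Real.sqrt_le_sqrt
  exact Finset.single_le_sum (f := fun j => ‖y j‖ ^ 2) (fun j _ => sq_nonneg _) (mem_univ i)

lemma entry_abs_le (M : Matrix ι ι ℝ) (i j : ι) : |M i j| ≤ ‖M‖ := by
  have h1 := M.l2_opNorm_mulVec (EuclideanSpace.single j (1:ℝ))
  rw [EuclideanSpace.norm_single, norm_one, mul_one] at h1
  have h2 := coord_abs_le ((EuclideanSpace.equiv ι ℝ).symm (M *ᵥ (EuclideanSpace.single j (1:ℝ)))) i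
  have h3 : ((EuclideanSpace.equiv ι ℝ).symm (M *ᵥ (EuclideanSpace.single j (1:ℝ)))) i = M i j := by
    simp [Matrix.mulVec, dotProduct, EuclideanSpace.single_apply]
  rw [h3] at h2
  exact h2.trans h1

lemma trace_abs_le (M : Matrix ι ι ℝ) : |M.trace| ≤ (Fintype.card ι : ℝ) * ‖M‖ := by
  rw [Matrix.trace]
  calc |∑ i, M.diag i| ≤ ∑ i, |M.diag i| := Finset.abs_sum_le_sum_abs _ _
    _ ≤ ∑ _i : ι, ‖M‖ := Finset.sum_le_sum (fun i _ => entry_abs_le M i i)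
    _ = (Fintype.card ι : ℝ) * ‖M‖ := by
        rw [Finset.sum_const, nsmul_eq_mul, Finset.card_univ]

lemma hasDerivAt_det (A : Matrix ι ι ℝ) (t : ℝ) :
    HasDerivAt (fun s : ℝ => (1 + s • A).det) (((1 + t • A).adjugate * A).trace) t := by
  set M : ℝ → Matrix ι ι ℝ := fun s => 1 + s • A with hM
  have hentry : ∀ (x y : ι), HasDerivAt (fun s : ℝ => M s x y) (A x y) t := by
    intro x y
    have h : (fun s : ℝ => M s x y) = fun s : ℝ => (1 : Matrix ι ι ℝ) x y + s * A x y := by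
      funext s
      simp [hM, Matrix.add_apply]
    rw [h]
    exact (hasDerivAt_mul_const (A x y)).const_add _
  have hprod : ∀ σ : Equiv.Perm ι, HasDerivAt (fun s => ∏ i, M s (σ i) i)
      (∑ j, (∏ i ∈ Finset.univ.erase j, M t (σ i) i) * A (σ j) j) t := by
    intro σ
    have := HasDerivAt.fun_finsetProd (u := Finset.univ)
      (f := fun (i : ι) (s : ℝ) => M s (σ i) i) (f' := fun i => A (σ i) i) (x := t)
      (fun i _ => hentry (σ i) i)
    simpa [smul_eq_mul] using this
  have hsum : HasDerivAt (fun s => ∑ σ : Equiv.Perm ι, ((Equiv.Perm.sign σ : ℤ) : ℝ) *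
      ∏ i, M s (σ i) i)
      (∑ σ : Equiv.Perm ι, ((Equiv.Perm.sign σ : ℤ) : ℝ) *
        ∑ j, (∏ i ∈ Finset.univ.erase j, M t (σ i) i) * A (σ j) j) t :=
    HasDerivAt.fun_sum (fun σ _ => (hprod σ).const_mul _)
  have hfun : (fun s => ∑ σ : Equiv.Perm ι, ((Equiv.Perm.sign σ : ℤ) : ℝ) *
      ∏ i, M s (σ i) i) = fun s : ℝ => (1 + s • A).det := by
    funext s
    rw [Matrix.det_apply']
  rw [hfun] at hsum
  convert hsum using 1
  -- trace(adj M * A) = ∑_σ ε σ * ∑_j ...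
  have h1 : ∀ j : ι, ((M t).adjugate * A) j j = ((M t).updateCol j (fun x => A x j)).det := by
    intro j
    have h2 : (M t).adjugate *ᵥ (fun x => A x j) = (M t).cramer (fun x => A x j) :=
      (Matrix.cramer_eq_adjugate_mulVec (M t) _).symm
    calc ((M t).adjugate * A) j j = ((M t).adjugate *ᵥ (fun x => A x j)) j := by
          simp [Matrix.mul_apply, Matrix.mulVec, dotProduct]
      _ = (M t).cramer (fun x => A x j) j := by rw [h2]
      _ = ((M t).updateCol j (fun x => A x j)).det := Matrix.cramer_apply _ _ _
  have h4 : ∀ (j : ι) (σ : Equiv.Perm ι),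
      (∏ i, ((M t).updateCol j (fun x => A x j)) (σ i) i)
        = A (σ j) j * ∏ i ∈ Finset.univ.erase j, M t (σ i) i := by
    intro j σ
    rw [← Finset.mul_prod_erase Finset.univ _ (Finset.mem_univ j)]
    rw [Matrix.updateCol_self]
    congr 1
    apply Finset.prod_congr rfl
    intro i hi
    exact Matrix.updateCol_ne (Finset.ne_of_mem_erase hi)
  show ((M t).adjugate * A).trace = _
  rw [Matrix.trace]
  calc ∑ j, ((M t).adjugate * A).diag j
      = ∑ j, ∑ σ : Equiv.Perm ι, ((Equiv.Perm.sign σ : ℤ) : ℝ) *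
          (A (σ j) j * ∏ i ∈ Finset.univ.erase j, M t (σ i) i) := by
        apply Finset.sum_congr rfl
        intro j _
        rw [Matrix.diag_apply, h1 j, Matrix.det_apply']
        exact Finset.sum_congr rfl (fun σ _ => by rw [h4 j σ])
    _ = ∑ σ : Equiv.Perm ι, ((Equiv.Perm.sign σ : ℤ) : ℝ) *
          ∑ j, (∏ i ∈ Finset.univ.erase j, M t (σ i) i) * A (σ j) j := by
        rw [Finset.sum_comm]
        apply Finset.sum_congr rfl
        intro σ _
        rw [Finset.mul_sum]
        exact Finset.sum_congr rfl (fun j _ => by ring)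

lemma trace_adjugate_mul (A : Matrix ι ι ℝ) {t : ℝ} (h : ‖t • A‖ < 1) :
    ((1 + t • A).adjugate * A).trace
      = (1 + t • A).det * ∑' k : ℕ, (-t) ^ k * (A ^ (k+1)).trace := by
  set x : Matrix ι ι ℝ := -(t • A) with hxdef
  have hx : ‖x‖ < 1 := by rwa [hxdef, norm_neg]
  have hMx : (1 : Matrix ι ι ℝ) + t • A = 1 - x := by rw [hxdef, sub_neg_eq_add]
  set N : Matrix ι ι ℝ := ∑' k : ℕ, x ^ k with hN
  have hsum : Summable (fun k : ℕ => x ^ k) := summable_geometric_of_norm_lt_one hx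
  have hNM : N * (1 + t • A) = 1 := by rw [hMx]; exact geom_series_mul_neg x hx
  have hadj : (1 + t • A).adjugate = (1 + t • A).det • N := by
    have h5 := Matrix.mul_adjugate (1 + t • A)
    calc (1 + t • A).adjugate = (N * (1 + t • A)) * (1 + t • A).adjugate := by
          rw [hNM, one_mul]
      _ = N * ((1 + t • A) * (1 + t • A).adjugate) := by rw [mul_assoc]
      _ = N * ((1 + t • A).det • 1) := by rw [h5]
      _ = (1 + t • A).det • N := by rw [mul_smul_comm, mul_one]
  rw [hadj, smul_mul_assoc, Matrix.trace_smul, smul_eq_mul]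
  congr 1
  -- trace (N * A) = ∑' k, (-t)^k * trace (A^(k+1))
  have hNA : HasSum (fun k : ℕ => x ^ k * A) (N * A) := hsum.hasSum.mul_right A
  have traceCLM : Matrix ι ι ℝ →L[ℝ] ℝ :=
    LinearMap.toContinuousLinearMap (Matrix.traceLinearMap ι ℝ ℝ)
  have hT : HasSum (fun k : ℕ => ((x ^ k * A).trace : ℝ)) ((N * A).trace) := by
    have := (LinearMap.toContinuousLinearMap (Matrix.traceLinearMap ι ℝ ℝ)).hasSum hNA
    simpa using this
  have hterm : ∀ k : ℕ, (x ^ k * A).trace = (-t) ^ k * (A ^ (k+1)).trace := by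
    intro k
    have : x ^ k = (-t) ^ k • A ^ k := by
      rw [hxdef, ← neg_smul, smul_pow]
    rw [this, smul_mul_assoc, Matrix.trace_smul, smul_eq_mul, ← pow_succ]
  rw [← hT.tsum_eq]
  exact tsum_congr hterm

lemma sum_Icc_one_eq {M : Type*} [AddCommMonoid M] (n : ℕ) (f : ℕ → M) :
    ∑ k ∈ Finset.Icc 1 n, f k = ∑ i ∈ Finset.range n, f (i+1) := by
  rw [← Finset.Ico_add_one_right_eq_Icc, Finset.sum_Ico_eq_sum_range]
  have h : n + 1 - 1 = n := by omega
  rw [h]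
  exact Finset.sum_congr rfl (fun i _ => by rw [add_comm])

lemma summable_add_one_mul_geometric {q : ℝ} (h0 : 0 ≤ q) (h1 : q < 1) :
    Summable (fun n : ℕ => ((n:ℝ)+1) * q ^ n) := by
  have hq : ‖q‖ < 1 := by rwa [Real.norm_eq_abs, abs_of_nonneg h0]
  have ha := summable_pow_mul_geometric_of_norm_lt_one (R := ℝ) 1 hq
  have hb := summable_geometric_of_lt_one h0 h1
  refine (ha.add hb).congr fun n => ?_
  push_cast
  ring

end SqrtDetAux

/-- **The recursion determines the volume factor.**
If `c 0 = 1` and for all `n ≥ 1`,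
`c n = (1/(2n)) ∑_{k=1}^{n} (−1)^{k−1} tr(A^k) c (n−k)`, then for every `t` with
`|t| · ‖A‖ < 1` (ℓ² operator norm), the series `∑ c n · t^n` converges to
`√(det (1 + t • A))`. -/
theorem sqrt_det_hasSum_of_recursion {ι : Type*} [Fintype ι] [Nonempty ι] [DecidableEq ι]
    (A : Matrix ι ι ℝ) (c : ℕ → ℝ) (hc0 : c 0 = 1)
    (hrec : ∀ n : ℕ, 1 ≤ n →
      c n = (1 / (2 * (n : ℝ))) *
        ∑ k ∈ Finset.Icc 1 n, (-1 : ℝ) ^ (k - 1) * (A ^ k).trace * c (n - k))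
    (t : ℝ) (ht : |t| * ‖A‖ < 1) :
    HasSum (fun n : ℕ => c n * t ^ n) (Real.sqrt (1 + t • A).det) := by
  classical
  by_cases hA : A = 0
  · subst hA
    have hcz : ∀ n, 1 ≤ n → c n = 0 := by
      intro n hn
      rw [hrec n hn, Finset.sum_eq_zero, mul_zero]
      intro k hk
      rw [Finset.mem_Icc] at hk
      rw [zero_pow (by omega : k ≠ 0), Matrix.trace_zero, mul_zero, zero_mul]
    have hdet : ((1 : Matrix ι ι ℝ) + t • (0 : Matrix ι ι ℝ)).det = 1 := by simp
    rw [hdet, Real.sqrt_one]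
    have hfun : (fun n : ℕ => c n * t ^ n) = (fun n : ℕ => if n = 0 then (1:ℝ) else 0) := by
      funext n
      rcases Nat.eq_zero_or_pos n with h | h
      · subst h; simp [hc0]
      · rw [if_neg (by omega), hcz n h, zero_mul]
    rw [hfun]
    exact hasSum_ite_eq 0 1
  · set d : ℝ := (Fintype.card ι : ℝ) with hd
    have hd1 : (1:ℝ) ≤ d := by
      rw [hd]; exact_mod_cast Fintype.card_pos
    set a : ℝ := d / 2 with ha'
    have ha : 0 < a := by rw [ha']; linarith
    set ρ : ℝ := ‖A‖ with hρ'
    have hρ : 0 < ρ := by rw [hρ']; exact norm_pos_iff.mpr hA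
    set r : ℝ := 1 / ρ with hr'
    have htr : |t| < r := by rw [hr', lt_div_iff₀ hρ]; exact ht
    have hr0 : 0 < r := by positivity
    have habslt : ∀ y : ℝ, |y| < r → ρ * |y| < 1 := by
      intro y hy
      rw [hr', lt_div_iff₀ hρ] at hy
      nlinarith
    -- trace bounds
    have hp : ∀ k : ℕ, 1 ≤ k → |((A ^ k).trace : ℝ)| ≤ d * ρ ^ k := by
      intro k hk
      calc |((A ^ k).trace : ℝ)| ≤ d * ‖A ^ k‖ := SqrtDetAux.trace_abs_le _
        _ ≤ d * ρ ^ k := by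
            have h1 := norm_pow_le' A (by omega : 0 < k)
            have h2 : (0:ℝ) ≤ d := by linarith
            rw [hρ']
            exact mul_le_mul_of_nonneg_left h1 h2
    set w : ℕ → ℝ := fun k => if k = 0 then 0 else
      (-1 : ℝ)^(k-1) * (A ^ k).trace / (2 * (k:ℝ)) with hw'
    have hwb : ∀ k : ℕ, |w k| ≤ (d/2) * ρ ^ k := by
      intro k
      match k with
      | 0 =>
        have hz : w 0 = 0 := by simp [hw']
        rw [hz, abs_zero, pow_zero, mul_one]
        linarith
      | m+1 =>
        rw [hw']
        simp only [Nat.succ_ne_zero, if_false]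
        rw [abs_div, abs_mul, abs_pow, abs_neg, abs_one, one_pow, one_mul]
        have h2 : |2 * ((m+1 : ℕ):ℝ)| = 2 * ((m:ℝ)+1) := by
          rw [abs_of_pos (by positivity)]; push_cast; ring
        rw [h2]
        have h3 := hp (m+1) (by omega)
        have h4 : (0:ℝ) < 2 * ((m:ℝ)+1) := by positivity
        rw [div_le_iff₀ h4]
        have h5 : (d/2) * ρ^(m+1) * (2 * ((m:ℝ)+1)) = (d * ρ^(m+1)) * ((m:ℝ)+1) := by ring
        rw [h5]
        have h6 : (1:ℝ) ≤ (m:ℝ)+1 := by linarith [Nat.cast_nonneg (α := ℝ) m]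
        nlinarith [abs_nonneg ((A^(m+1)).trace : ℝ), pow_pos hρ (m+1)]
    -- inductive bound on c
    have hcb : ∀ n, |c n| ≤ SqrtDetAux.u a n * ρ ^ n := by
      intro n
      induction n using Nat.strong_induction_on with
      | _ n ih =>
        match n with
        | 0 => simp [hc0, SqrtDetAux.u]
        | m+1 =>
          have hn1 : 1 ≤ m+1 := by omega
          rw [hrec (m+1) hn1, abs_mul]
          have hnc : (0:ℝ) < ((m+1 : ℕ):ℝ) := by positivity
          have habs1 : |1/(2*((m+1:ℕ):ℝ))| = 1/(2*((m+1:ℕ):ℝ)) := abs_of_pos (by positivity)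
          rw [habs1]
          have hbound : |∑ k ∈ Finset.Icc 1 (m+1), (-1:ℝ)^(k-1) * (A^k).trace * c (m+1-k)|
              ≤ d * ρ^(m+1) * ∑ j ∈ Finset.range (m+1), SqrtDetAux.u a j := by
            calc |∑ k ∈ Finset.Icc 1 (m+1), (-1:ℝ)^(k-1) * (A^k).trace * c (m+1-k)|
                ≤ ∑ k ∈ Finset.Icc 1 (m+1), |(-1:ℝ)^(k-1) * (A^k).trace * c (m+1-k)| :=
                  Finset.abs_sum_le_sum_abs _ _
              _ ≤ ∑ k ∈ Finset.Icc 1 (m+1), d * ρ^(m+1) * SqrtDetAux.u a (m+1-k) := by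
                  apply Finset.sum_le_sum
                  intro k hk
                  rw [Finset.mem_Icc] at hk
                  rw [abs_mul, abs_mul, abs_pow, abs_neg, abs_one, one_pow, one_mul]
                  have h1 := hp k hk.1
                  have h2 := ih (m+1-k) (by omega)
                  have hu := SqrtDetAux.u_pos ha (m+1-k)
                  have h3 : |(A^k).trace| * |c (m+1-k)|
                      ≤ (d * ρ^k) * (SqrtDetAux.u a (m+1-k) * ρ^(m+1-k)) := by
                    apply mul_le_mul h1 h2 (abs_nonneg _)
                    positivity
                  have hpow : ρ ^ k * ρ ^ (m+1-k) = ρ ^ (m+1) := by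
                    rw [← pow_add]
                    congr 1
                    omega
                  have h4 : (d * ρ^k) * (SqrtDetAux.u a (m+1-k) * ρ^(m+1-k))
                      = d * ρ^(m+1) * SqrtDetAux.u a (m+1-k) := by
                    calc (d * ρ^k) * (SqrtDetAux.u a (m+1-k) * ρ^(m+1-k))
                        = d * SqrtDetAux.u a (m+1-k) * (ρ^k * ρ^(m+1-k)) := by ring
                      _ = d * ρ^(m+1) * SqrtDetAux.u a (m+1-k) := by rw [hpow]; ring
                  rw [h4] at h3
                  exact h3
              _ = d * ρ^(m+1) * ∑ j ∈ Finset.range (m+1), SqrtDetAux.u a j := by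
                  rw [← Finset.mul_sum]
                  congr 1
                  rw [SqrtDetAux.sum_Icc_one_eq]
                  rw [← Finset.sum_range_reflect (fun j => SqrtDetAux.u a j) (m+1)]
                  apply Finset.sum_congr rfl
                  intro i hi
                  rw [Finset.mem_range] at hi
                  congr 1
                  omega
          have hsum_u : ∑ j ∈ Finset.range (m+1), SqrtDetAux.u a j
              = ((m+1:ℕ):ℝ) * SqrtDetAux.u a (m+1) / a := by
            have h := SqrtDetAux.sum_u ha (m+1)
            rw [eq_div_iff (ne_of_gt ha)]
            linarith [h]
          calc (1/(2*((m+1:ℕ):ℝ))) * |∑ k ∈ Finset.Icc 1 (m+1), (-1:ℝ)^(k-1) * (A^k).trace * c (m+1-k)|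
              ≤ (1/(2*((m+1:ℕ):ℝ))) * (d * ρ^(m+1) * (((m+1:ℕ):ℝ) * SqrtDetAux.u a (m+1) / a)) := by
                rw [← hsum_u]
                exact mul_le_mul_of_nonneg_left hbound (by positivity)
            _ = SqrtDetAux.u a (m+1) * ρ^(m+1) := by
                have hane : a ≠ 0 := ne_of_gt ha
                have : d = 2 * a := by rw [ha']; ring
                rw [this]
                field_simp
    -- summability of coefficient families
    have hsc : ∀ x : ℝ, 0 ≤ x → x < r → Summable (fun n : ℕ => ((n:ℝ)+1) * |c n| * x ^ n) := by
      intro x hx hxr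
      have hq1 : ρ * x < 1 := by
        have := habslt x (by rwa [abs_of_nonneg hx])
        rwa [abs_of_nonneg hx] at this
      refine Summable.of_nonneg_of_le (fun n => by positivity) (fun n => ?_)
        (SqrtDetAux.summable_u_aux ha (by positivity) hq1)
      have h1 : ((n:ℝ)+1) * |c n| * x^n ≤ ((n:ℝ)+1) * (SqrtDetAux.u a n * ρ^n) * x^n := by
        have h2 := mul_le_mul_of_nonneg_left (hcb n) (show (0:ℝ) ≤ (n:ℝ)+1 by positivity)
        exact mul_le_mul_of_nonneg_right h2 (by positivity)
      calc ((n:ℝ)+1) * |c n| * x^n ≤ ((n:ℝ)+1) * (SqrtDetAux.u a n * ρ^n) * x^n := h1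
        _ = ((n:ℝ)+1) * SqrtDetAux.u a n * (ρ*x)^n := by rw [mul_pow]; ring
    have hsw : ∀ x : ℝ, 0 ≤ x → x < r → Summable (fun n : ℕ => ((n:ℝ)+1) * |w n| * x ^ n) := by
      intro x hx hxr
      have hq1 : ρ * x < 1 := by
        have := habslt x (by rwa [abs_of_nonneg hx])
        rwa [abs_of_nonneg hx] at this
      refine Summable.of_nonneg_of_le (fun n => by positivity) (fun n => ?_)
        ((SqrtDetAux.summable_add_one_mul_geometric (by positivity) hq1).mul_left (d/2))
      have h1 : ((n:ℝ)+1) * |w n| * x^n ≤ ((n:ℝ)+1) * ((d/2) * ρ^n) * x^n := by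
        have h2 := mul_le_mul_of_nonneg_left (hwb n) (show (0:ℝ) ≤ (n:ℝ)+1 by positivity)
        exact mul_le_mul_of_nonneg_right h2 (by positivity)
      calc ((n:ℝ)+1) * |w n| * x^n ≤ ((n:ℝ)+1) * ((d/2) * ρ^n) * x^n := h1
        _ = (d/2) * (((n:ℝ)+1) * (ρ*x)^n) := by rw [mul_pow]; ring
    -- coefficient identity from the recursion
    have he1 : ∀ i : ℕ, ((i:ℝ)+1) * w (i+1) = (-1:ℝ)^i * ((A^(i+1)).trace) / 2 := by
      intro i
      rw [hw']
      simp only [Nat.succ_ne_zero, if_false, Nat.add_sub_cancel]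
      have h1 : ((i+1 : ℕ):ℝ) = (i:ℝ)+1 := by push_cast; ring
      rw [h1]
      have h2 : ((i:ℝ)+1) ≠ 0 := by positivity
      field_simp
    have hkey : ∀ n : ℕ,
        (∑ kl ∈ Finset.HasAntidiagonal.antidiagonal n, (((kl.1:ℝ)+1) * w (kl.1+1)) * c kl.2)
          = ((n:ℝ)+1) * c (n+1) := by
      intro n
      rw [Finset.Nat.sum_antidiagonal_eq_sum_range_succ_mk]
      have hS : ∑ k ∈ Finset.Icc 1 (n+1), (-1:ℝ)^(k-1) * (A^k).trace * c (n+1-k)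
          = ∑ i ∈ Finset.range (n+1), (-1:ℝ)^i * (A^(i+1)).trace * c (n-i) := by
        rw [SqrtDetAux.sum_Icc_one_eq]
        apply Finset.sum_congr rfl
        intro i _
        have e2 : i + 1 - 1 = i := by omega
        have e4 : n + 1 - (i + 1) = n - i := by omega
        rw [e2, e4]
      have hrw := hrec (n+1) (by omega)
      rw [hS] at hrw
      have hne : ((n+1:ℕ):ℝ) ≠ 0 := by positivity
      calc ∑ i ∈ Finset.range (n+1), (((i:ℝ)+1) * w (i+1)) * c (n-i)
          = ∑ i ∈ Finset.range (n+1), ((-1:ℝ)^i * (A^(i+1)).trace / 2) * c (n-i) := by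
            apply Finset.sum_congr rfl
            intro i _
            rw [he1 i]
        _ = (1/2) * ∑ i ∈ Finset.range (n+1), (-1:ℝ)^i * (A^(i+1)).trace * c (n-i) := by
            rw [Finset.mul_sum]
            apply Finset.sum_congr rfl
            intro i _
            ring
        _ = ((n:ℝ)+1) * c (n+1) := by
            rw [hrw]
            have h1 : ((n+1:ℕ):ℝ) = (n:ℝ)+1 := by push_cast; ring
            rw [h1]
            have h2 : ((n:ℝ)+1) ≠ 0 := by positivity
            field_simp
    -- derivative of P
    have hPd : ∀ y : ℝ, |y| < r →
        HasDerivAt (fun s : ℝ => ∑' n : ℕ, w n * s ^ n)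
          (∑' n : ℕ, ((n:ℝ)+1) * w (n+1) * y ^ n) y := by
      intro y hy
      have h := SqrtDetAux.ps_hasDerivAt hsw hy
      rwa [SqrtDetAux.ps_deriv_shift hsw hy] at h
    -- derivative of F, with the ODE F' = W * F
    have hFd : ∀ y : ℝ, |y| < r →
        HasDerivAt (fun s : ℝ => ∑' n : ℕ, c n * s ^ n)
          ((∑' n : ℕ, ((n:ℝ)+1) * w (n+1) * y ^ n) * (∑' n : ℕ, c n * y ^ n)) y := by
      intro y hy
      have h := SqrtDetAux.ps_hasDerivAt hsc hy
      rw [SqrtDetAux.ps_deriv_shift hsc hy] at h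
      have hq1 : ρ * |y| < 1 := habslt y hy
      have hnf : Summable (fun i : ℕ => ‖(((i:ℝ)+1) * w (i+1)) * y ^ i‖) := by
        refine Summable.of_nonneg_of_le (fun _ => norm_nonneg _) (fun i => ?_)
          ((SqrtDetAux.summable_add_one_mul_geometric (by positivity) hq1).mul_left ((d/2) * ρ))
        rw [norm_mul, norm_mul, norm_pow, Real.norm_eq_abs, Real.norm_eq_abs, Real.norm_eq_abs]
        rw [abs_of_pos (by positivity : (0:ℝ) < (i:ℝ)+1)]
        have h1 := hwb (i+1)
        calc ((i:ℝ)+1) * |w (i+1)| * |y|^i ≤ ((i:ℝ)+1) * ((d/2) * ρ^(i+1)) * |y|^i := by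
              have h2 := mul_le_mul_of_nonneg_left h1 (show (0:ℝ) ≤ (i:ℝ)+1 by positivity)
              exact mul_le_mul_of_nonneg_right h2 (by positivity)
          _ = (d/2) * ρ * (((i:ℝ)+1) * (ρ * |y|)^i) := by rw [pow_succ, mul_pow]; ring
      have hng : Summable (fun j : ℕ => ‖c j * y ^ j‖) := by
        refine Summable.of_nonneg_of_le (fun _ => norm_nonneg _) (fun j => ?_)
          (SqrtDetAux.summable_u_aux ha (by positivity) hq1)
        rw [norm_mul, norm_pow, Real.norm_eq_abs, Real.norm_eq_abs]
        have h1 := hcb j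
        have hu := SqrtDetAux.u_pos ha j
        calc |c j| * |y|^j ≤ (SqrtDetAux.u a j * ρ^j) * |y|^j :=
              mul_le_mul_of_nonneg_right h1 (by positivity)
          _ = SqrtDetAux.u a j * (ρ*|y|)^j := by rw [mul_pow]; ring
          _ ≤ ((j:ℝ)+1) * SqrtDetAux.u a j * (ρ*|y|)^j := by
              rw [mul_assoc]
              refine le_mul_of_one_le_left ?_ ?_
              · have h3 : (0:ℝ) ≤ (ρ*|y|)^j := by positivity
                exact mul_nonneg hu.le h3
              · have := Nat.cast_nonneg (α := ℝ) j
                linarith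
      have hcp := tsum_mul_tsum_eq_tsum_sum_antidiagonal_of_summable_norm hnf hng
      have hinner : ∀ n : ℕ, (∑ kl ∈ Finset.HasAntidiagonal.antidiagonal n,
          ((((kl.1:ℝ)+1) * w (kl.1+1)) * y ^ kl.1) * (c kl.2 * y ^ kl.2))
            = ((n:ℝ)+1) * c (n+1) * y ^ n := by
        intro n
        rw [← hkey n, Finset.sum_mul]
        apply Finset.sum_congr rfl
        intro kl hkl
        have hklm := Finset.HasAntidiagonal.mem_antidiagonal.mp hkl
        rw [← hklm, pow_add]
        ring
      have hWF : (∑' n : ℕ, ((n:ℝ)+1) * w (n+1) * y ^ n) * (∑' n : ℕ, c n * y ^ n)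
          = ∑' n : ℕ, ((n:ℝ)+1) * c (n+1) * y ^ n := by
        rw [hcp]
        exact tsum_congr hinner
      rwa [hWF]
    -- values at 0
    have hF0 : ∑' n : ℕ, c n * (0:ℝ) ^ n = 1 := by
      rw [tsum_eq_single 0 (fun n hn => by rw [zero_pow hn, mul_zero])]
      simp [hc0]
    have hP0 : ∑' n : ℕ, w n * (0:ℝ) ^ n = 0 := by
      rw [tsum_eq_single 0 (fun n hn => by rw [zero_pow hn, mul_zero])]
      rw [hw']
      simp
    -- constancy principle
    have hconst : ∀ G : ℝ → ℝ, (∀ y ∈ Set.Ioo (-r) r, HasDerivAt G 0 y) → G t = G 0 := by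
      intro G hG
      have h0 : (0:ℝ) ∈ Set.Ioo (-r) r := by
        constructor
        · linarith
        · exact hr0
      have hts : t ∈ Set.Ioo (-r) r := by
        have := abs_lt.mp htr
        exact ⟨this.1, this.2⟩
      have hb := Convex.norm_image_sub_le_of_norm_hasDerivWithin_le
        (f' := fun _ : ℝ => (0:ℝ)) (C := 0)
        (fun y hy => (hG y hy).hasDerivWithinAt)
        (fun y _ => by simp) (convex_Ioo (-r) r) h0 hts
      rw [zero_mul] at hb
      have := norm_le_zero_iff.mp hb
      exact sub_eq_zero.mp this
    have hIoo : ∀ y : ℝ, y ∈ Set.Ioo (-r) r → |y| < r := by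
      intro y hy
      exact abs_lt.mpr ⟨hy.1, hy.2⟩
    -- F = exp ∘ P
    have hFP : (∑' n : ℕ, c n * t ^ n) = Real.exp (∑' n : ℕ, w n * t ^ n) := by
      have hGd : ∀ y ∈ Set.Ioo (-r) r, HasDerivAt
          (fun s : ℝ => (∑' n : ℕ, c n * s ^ n) * Real.exp (-(∑' n : ℕ, w n * s ^ n))) 0 y := by
        intro y hy
        have h1 := hFd y (hIoo y hy)
        have h2 := ((hPd y (hIoo y hy)).neg).exp
        have h3 := h1.fun_mul h2
        exact h3.congr_deriv (by ring)
      have hGt := hconst _ hGd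
      rw [hF0, hP0] at hGt
      simp only [neg_zero, Real.exp_zero, mul_one] at hGt
      rw [Real.exp_neg] at hGt
      exact (mul_inv_eq_one₀ (Real.exp_ne_zero _)).mp hGt
    -- det = exp (2 P)
    have hDd : ∀ y ∈ Set.Ioo (-r) r, HasDerivAt (fun s : ℝ => (1 + s • A).det)
        ((1 + y • A).det * (2 * ∑' n : ℕ, ((n:ℝ)+1) * w (n+1) * y ^ n)) y := by
      intro y hy
      have h1 := SqrtDetAux.hasDerivAt_det A y
      have hnorm : ‖y • A‖ < 1 := by
        rw [norm_smul, Real.norm_eq_abs]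
        have := habslt y (hIoo y hy)
        rw [hρ'] at this
        linarith [mul_comm |y| ‖A‖]
      rw [SqrtDetAux.trace_adjugate_mul A hnorm] at h1
      have h2 : (∑' k : ℕ, (-y)^k * ((A^(k+1)).trace : ℝ))
          = 2 * ∑' n : ℕ, ((n:ℝ)+1) * w (n+1) * y ^ n := by
        rw [← tsum_mul_left]
        apply tsum_congr
        intro k
        rw [show (2:ℝ) * (((k:ℝ)+1) * w (k+1) * y ^ k) = (((k:ℝ)+1) * w (k+1)) * y ^ k * 2 by ring]
        rw [he1 k, neg_pow]
        ring
      rw [h2] at h1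
      exact h1
    have hD : ((1:Matrix ι ι ℝ) + t • A).det = Real.exp (2 * ∑' n : ℕ, w n * t ^ n) := by
      have hHd : ∀ y ∈ Set.Ioo (-r) r, HasDerivAt
          (fun s : ℝ => (1 + s • A).det * Real.exp (-(2 * ∑' n : ℕ, w n * s ^ n))) 0 y := by
        intro y hy
        have h2 : HasDerivAt (fun s : ℝ => Real.exp (-(2 * ∑' n : ℕ, w n * s ^ n)))
            (Real.exp (-(2 * ∑' n : ℕ, w n * y ^ n)) *
              (-(2 * ∑' n : ℕ, ((n:ℝ)+1) * w (n+1) * y ^ n))) y :=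
          (((hPd y (hIoo y hy)).const_mul 2).neg).exp
        have h3 := (hDd y hy).fun_mul h2
        exact h3.congr_deriv (by ring)
      have hHt := hconst _ hHd
      rw [hP0] at hHt
      simp only [zero_smul, add_zero, Matrix.det_one, mul_zero, neg_zero, Real.exp_zero,
        mul_one] at hHt
      rw [Real.exp_neg] at hHt
      exact (mul_inv_eq_one₀ (Real.exp_ne_zero _)).mp hHt
    -- conclusion
    have hsummable : Summable (fun n : ℕ => c n * t ^ n) := SqrtDetAux.ps_summable hsc htr
    have hfinal : ∑' n : ℕ, c n * t ^ n = Real.sqrt ((1 + t • A).det) := by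
      rw [hD, hFP]
      rw [show (2:ℝ) * ∑' n : ℕ, w n * t ^ n
        = (∑' n : ℕ, w n * t ^ n) + ∑' n : ℕ, w n * t ^ n by ring]
      rw [Real.exp_add, Real.sqrt_mul_self (Real.exp_nonneg _)]
    exact hfinal ▸ hsummable.hasSum
end

section
/- Let ι be a nonempty finite type and A : Matrix ι ι ℝ a symmetric matrix (Aᵀ = A) with ‖A‖ < 1 in the ℓ² operator norm. Then 1 + A is positive definite, and its positive-semidefinite square root equals the binomial series: (1 + A).PosSemidef.sqrt = ∑'_{n : ℕ} Ring.choose (1/2 : ℝ) n • A^n. -/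
open scoped Matrix Matrix.Norms.L2Operator MatrixOrder

/-! Scalar lemmas about `Ring.choose (1/2) n`. -/

noncomputable def cc (n : ℕ) : ℝ := Ring.choose (1/2 : ℝ) n

lemma desc_smeval_eval (n : ℕ) (r : ℝ) :
    ((descPochhammer ℤ n).smeval r) = (descPochhammer ℝ n).eval r := by
  induction n with
  | zero => simp [descPochhammer]
  | succ k ih =>
    rw [descPochhammer_succ_right, descPochhammer_succ_right, Polynomial.smeval_mul,
      Polynomial.eval_mul, ih]
    congr 1
    simp [Polynomial.smeval_sub, Polynomial.smeval_X, Polynomial.smeval_natCast]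

lemma ring_choose_rec (r : ℝ) (n : ℕ) :
    (n + 1 : ℝ) * Ring.choose r (n + 1) = (r - n) * Ring.choose r n := by
  have h1 := Ring.descPochhammer_eq_factorial_smul_choose (R := ℝ) r n
  have h2 := Ring.descPochhammer_eq_factorial_smul_choose (R := ℝ) r (n + 1)
  rw [desc_smeval_eval] at h1 h2
  rw [descPochhammer_succ_eval, h1] at h2
  have hf : ((n+1).factorial : ℝ) = (n+1) * n.factorial := by
    push_cast [Nat.factorial_succ]; ring
  rw [nsmul_eq_mul, nsmul_eq_mul, hf] at h2
  have hfac : (n.factorial : ℝ) ≠ 0 := Nat.cast_ne_zero.mpr n.factorial_ne_zero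
  apply mul_left_cancel₀ hfac
  nlinarith [h2]

lemma cc_zero : cc 0 = 1 := Ring.choose_zero_right _

lemma cc_one : cc 1 = 1/2 := by
  have h := ring_choose_rec (1/2 : ℝ) 0
  norm_num at h
  simpa [cc, Ring.choose_zero_right] using h

lemma cc_abs_rec (n : ℕ) :
    (n + 2 : ℝ) * |cc (n + 2)| = (n + 1/2) * |cc (n + 1)| := by
  have h := ring_choose_rec (1/2 : ℝ) (n + 1)
  have h2 : |(↑(n+1) + 1 : ℝ) * Ring.choose (1/2:ℝ) (n+1+1)| =
      |(1/2 - ↑(n+1) : ℝ) * Ring.choose (1/2:ℝ) (n+1)| := by rw [h]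
  rw [abs_mul, abs_mul] at h2
  have ha : |(↑(n+1) + 1 : ℝ)| = (n + 2 : ℝ) := by
    rw [abs_of_nonneg (by push_cast; linarith)]; push_cast; ring
  have hb : |(1/2 - ↑(n+1) : ℝ)| = (n + 1/2 : ℝ) := by
    rw [abs_of_nonpos (by push_cast; linarith)]; push_cast; ring
  rw [ha, hb] at h2
  have : cc (n+2) = Ring.choose (1/2:ℝ) (n+1+1) := rfl
  rw [this, h2]; rfl

lemma cc_partial (N : ℕ) :
    ∑ n ∈ Finset.range N, |cc (n + 1)| = 1 - 2 * (N + 1 : ℝ) * |cc (N + 1)| := by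
  induction N with
  | zero =>
    rw [Finset.sum_range_zero, abs_of_nonneg (by rw [cc_one]; norm_num), cc_one]
    norm_num
  | succ k ih =>
    rw [Finset.sum_range_succ, ih]
    have := cc_abs_rec k
    push_cast
    nlinarith [this]

lemma cc_partial_le (N : ℕ) : ∑ n ∈ Finset.range N, |cc (n + 1)| ≤ 1 := by
  rw [cc_partial]
  have : (0:ℝ) ≤ 2 * (N + 1 : ℝ) * |cc (N + 1)| := by positivity
  linarith

lemma cc_summable : Summable (fun n => |cc (n + 1)|) :=
  summable_of_sum_range_le (fun _ => abs_nonneg _) cc_partial_le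

lemma cc_tsum_le : ∑' n, |cc (n + 1)| ≤ 1 :=
  Summable.tsum_le_of_sum_range_le cc_summable cc_partial_le

lemma cc_abs_le_one (n : ℕ) : |cc n| ≤ 1 := by
  cases n with
  | zero => simp [cc_zero]
  | succ k =>
    calc |cc (k+1)| ≤ ∑ n ∈ Finset.range (k+1), |cc (n + 1)| := by
          apply Finset.single_le_sum (f := fun n => |cc (n+1)|) (fun i _ => abs_nonneg _)
          exact Finset.self_mem_range_succ k
      _ ≤ 1 := cc_partial_le _

/-! Quadratic-form positivity lemmas. -/

section Aux

variable {ι : Type*} [Fintype ι] [Nonempty ι] [DecidableEq ι]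

omit [Nonempty ι] in
lemma quad_bound (M : Matrix ι ι ℝ) (x : EuclideanSpace ℝ ι) :
    |(x : ι → ℝ) ⬝ᵥ (M *ᵥ (x : ι → ℝ))| ≤ ‖M‖ * ‖x‖ ^ 2 := by
  have h1 : (x : ι → ℝ) ⬝ᵥ (M *ᵥ (x : ι → ℝ)) =
      inner ℝ x ((EuclideanSpace.equiv ι ℝ).symm (M *ᵥ (x : ι → ℝ))) := by
    simp [PiLp.inner_apply, dotProduct, RCLike.inner_apply, mul_comm]
  rw [h1]
  calc |inner ℝ x ((EuclideanSpace.equiv ι ℝ).symm (M *ᵥ (x : ι → ℝ)))|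
      ≤ ‖x‖ * ‖(EuclideanSpace.equiv ι ℝ).symm (M *ᵥ (x : ι → ℝ))‖ := abs_real_inner_le_norm _ _
    _ ≤ ‖x‖ * (‖M‖ * ‖x‖) :=
        mul_le_mul_of_nonneg_left (M.l2_opNorm_mulVec x) (norm_nonneg x)
    _ = ‖M‖ * ‖x‖ ^ 2 := by ring

omit [Nonempty ι] in
lemma posDef_of_norm_lt {M : Matrix ι ι ℝ} (hherm : (1 + M).IsHermitian) (h : ‖M‖ < 1) :
    (1 + M).PosDef := by
  refine Matrix.PosDef.of_dotProduct_mulVec_pos hherm fun x hx => ?_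
  rw [star_trivial]
  let y : EuclideanSpace ℝ ι := WithLp.toLp 2 x
  show (0:ℝ) < (y : ι → ℝ) ⬝ᵥ ((1 + M) *ᵥ (y : ι → ℝ))
  have hq := quad_bound M y
  have hnorm : ‖y‖ ^ 2 = (y : ι → ℝ) ⬝ᵥ (y : ι → ℝ) := by
    rw [EuclideanSpace.norm_eq, Real.sq_sqrt (by positivity)]
    simp [dotProduct, Real.norm_eq_abs, pow_two]
  have hy0 : y ≠ 0 := by intro h; apply hx; simpa [y] using congrArg WithLp.ofLp h
  have hpos : (0:ℝ) < ‖y‖ ^ 2 := pow_pos (norm_pos_iff.mpr hy0) 2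
  have hsplit : (y : ι → ℝ) ⬝ᵥ ((1 + M) *ᵥ (y : ι → ℝ)) =
      (y : ι → ℝ) ⬝ᵥ (y : ι → ℝ) + (y : ι → ℝ) ⬝ᵥ (M *ᵥ (y : ι → ℝ)) := by
    simp [Matrix.add_mulVec, dotProduct_add, Matrix.one_mulVec]
  rw [hsplit, ← hnorm]
  have h2 := (abs_le.mp hq).1
  nlinarith

end Aux

/-- **The vierbein is the canonical matrix square root of the metric.**
For a symmetric real matrix `A` with `‖A‖ < 1` (ℓ² operator norm), `1 + A` is positive
definite and its positive-semidefinite square root equals the binomial series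
`∑' n, Ring.choose (1/2) n • A^n`. -/
theorem posSemidef_sqrt_eq_binomialSeries {ι : Type*} [Fintype ι] [Nonempty ι]
    [DecidableEq ι] (A : Matrix ι ι ℝ) (hsym : Aᵀ = A) (hA : ‖A‖ < 1) :
    ∃ hpd : (1 + A).PosDef,
      CFC.sqrt (1 + A) = ∑' n : ℕ, Ring.choose (1 / 2 : ℝ) n • A ^ n := by
  have hA0 : (0:ℝ) ≤ ‖A‖ := norm_nonneg A
  set F : ℕ → Matrix ι ι ℝ := fun n => cc n • A ^ n with hF
  -- norm bounds
  have hpow : ∀ n : ℕ, ‖A ^ n‖ ≤ ‖A‖ ^ n := by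
    intro n
    cases n with
    | zero => rw [pow_zero, pow_zero, CStarRing.norm_one]
    | succ k => exact norm_pow_le' A k.succ_pos
  have hFnorm : ∀ n : ℕ, ‖F n‖ ≤ ‖A‖ ^ n := by
    intro n
    rw [hF, norm_smul]
    calc ‖cc n‖ * ‖A ^ n‖ ≤ 1 * ‖A‖ ^ n := by
          apply mul_le_mul (cc_abs_le_one n) (hpow n) (norm_nonneg _) zero_le_one
      _ = ‖A‖ ^ n := one_mul _
  have hFnormsum : Summable (fun n => ‖F n‖) :=
    Summable.of_nonneg_of_le (fun n => norm_nonneg _) hFnorm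
      (summable_geometric_of_lt_one hA0 hA)
  have hFsum : Summable F := hFnormsum.of_norm
  set S : Matrix ι ι ℝ := ∑' n, F n with hS
  -- S is symmetric / Hermitian
  have hSsymm : Sᵀ = S := by
    rw [hS, Matrix.transpose_tsum]
    congr 1
    ext n
    rw [hF, Matrix.transpose_smul, Matrix.transpose_pow, hsym]
  have hconj : ∀ M : Matrix ι ι ℝ, Mᴴ = Mᵀ := fun M => by
    ext i j; simp [Matrix.conjTranspose_apply]
  have hSherm : S.IsHermitian := by rw [Matrix.IsHermitian, hconj, hSsymm]
  -- Cauchy product: S * S = 1 + A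
  have hcauchy := tsum_mul_tsum_eq_tsum_sum_antidiagonal_of_summable_norm hFnormsum hFnormsum
  have hinner : ∀ n : ℕ, ∑ kl ∈ Finset.HasAntidiagonal.antidiagonal n, F kl.1 * F kl.2 =
      Ring.choose (1:ℝ) n • A ^ n := by
    intro n
    have : ∀ kl ∈ Finset.HasAntidiagonal.antidiagonal n, F kl.1 * F kl.2 = (cc kl.1 * cc kl.2) • A ^ n := by
      intro kl hkl
      rw [hF]
      rw [smul_mul_smul_comm, ← pow_add, (Finset.HasAntidiagonal.mem_antidiagonal.mp hkl)]
    rw [Finset.sum_congr rfl this, ← Finset.sum_smul]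
    congr 1
    have := Ring.add_choose_eq (r := (1/2:ℝ)) (s := (1/2:ℝ)) n (Commute.all _ _)
    norm_num at this
    rw [this]
    rfl
  have hSS : S * S = 1 + A := by
    rw [hS, hcauchy]
    have h1 : ∀ n : ℕ, ∑ kl ∈ Finset.HasAntidiagonal.antidiagonal n, F kl.1 * F kl.2 =
        ((Nat.choose 1 n : ℝ)) • A ^ n := by
      intro n
      rw [hinner n]
      congr 1
      have : ((1:ℕ) : ℝ) = (1:ℝ) := by norm_num
      rw [← this, Ring.choose_natCast]
    rw [tsum_congr h1, tsum_eq_sum (s := Finset.range 2) (by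
      intro n hn
      have h2 : 1 < n := by
        rcases Nat.lt_or_ge n 2 with h | h
        · exact absurd (Finset.mem_range.mpr h) hn
        · omega
      rw [Nat.choose_eq_zero_of_lt h2]
      simp)]
    rw [Finset.sum_range_succ, Finset.sum_range_one]
    norm_num
  -- ‖S - 1‖ small : S = 1 + T
  have hzeroadd := Summable.tsum_eq_zero_add hFsum
  have hF0 : F 0 = 1 := by rw [hF]; simp [cc_zero]
  set T : Matrix ι ι ℝ := ∑' n, F (n + 1) with hT
  have hST : S = 1 + T := by rw [hS, hzeroadd, hF0]
  have hTnorm : ‖T‖ < 1 := by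
    have hsum2 : Summable (fun n => |cc (n + 1)| * ‖A‖) := cc_summable.mul_right _
    have hterm : ∀ n : ℕ, ‖F (n + 1)‖ ≤ |cc (n + 1)| * ‖A‖ := by
      intro n
      rw [hF, norm_smul]
      apply mul_le_mul_of_nonneg_left _ (abs_nonneg _)
      calc ‖A ^ (n+1)‖ ≤ ‖A‖ ^ (n+1) := hpow _
        _ ≤ ‖A‖ ^ 1 := pow_le_pow_of_le_one hA0 hA.le (by omega)
        _ = ‖A‖ := pow_one _
    have hsum1 : Summable (fun n => ‖F (n + 1)‖) :=
      Summable.of_nonneg_of_le (fun n => norm_nonneg _) hterm hsum2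
    calc ‖T‖ ≤ ∑' n, ‖F (n + 1)‖ := norm_tsum_le_tsum_norm hsum1
      _ ≤ ∑' n, |cc (n + 1)| * ‖A‖ := Summable.tsum_le_tsum hterm hsum1 hsum2
      _ = (∑' n, |cc (n + 1)|) * ‖A‖ := tsum_mul_right
      _ ≤ 1 * ‖A‖ := mul_le_mul_of_nonneg_right cc_tsum_le hA0
      _ < 1 := by rw [one_mul]; exact hA
  -- positivity
  have hSherm' : (1 + T).IsHermitian := hST ▸ hSherm
  have hSpd : S.PosDef := hST ▸ posDef_of_norm_lt hSherm' hTnorm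
  have hApdherm : (1 + A).IsHermitian := by
    rw [Matrix.IsHermitian, hconj, Matrix.transpose_add, Matrix.transpose_one, hsym]
  have hpd : (1 + A).PosDef := posDef_of_norm_lt hApdherm hA
  refine ⟨hpd, ?_⟩
  have hsq : S ^ 2 = 1 + A := by rw [pow_two, hSS]
  exact CFC.sqrt_unique hSS hSpd.posSemidef.nonneg
end

section
/- Let ι and ϑ be nonempty finite types, A : Matrix ι ι ℝ and B : Matrix ϑ ϑ ℝ with ‖A‖ < 1 and ‖B‖ < 1 in the ℓ² operator norm. Then 1 + A and 1 + B are invertible and the family n ↦ (−1)^n • ∑_{p=0}^{n} (A^p ⊗ₖ B^{n−p}) has sum (1 + A)⁻¹ ⊗ₖ (1 + B)⁻¹. -/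
open scoped Matrix.Norms.L2Operator Kronecker

open Matrix

private lemma euclid_norm_sq {n : Type*} [Fintype n] (x : n → ℝ) :
    ‖(WithLp.equiv 2 (n → ℝ)).symm x‖ ^ 2 = ∑ i, x i ^ 2 := by
  rw [EuclideanSpace.norm_eq, Real.sq_sqrt (Finset.sum_nonneg fun i _ => by positivity)]
  simp [Real.norm_eq_abs, sq_abs]

private lemma euclid_norm_sq' {n : Type*} [Fintype n] (x : n → ℝ) :
    ‖WithLp.toLp 2 x‖ ^ 2 = ∑ i, x i ^ 2 :=
  euclid_norm_sq x

private lemma l2_norm_le_of_mulVec {n : Type*} [Fintype n] [DecidableEq n]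
    (M : Matrix n n ℝ) (c : ℝ) (hc : 0 ≤ c)
    (h : ∀ v : n → ℝ,
      ‖(WithLp.equiv 2 (n → ℝ)).symm (M *ᵥ v)‖ ≤ c * ‖(WithLp.equiv 2 (n → ℝ)).symm v‖) :
    ‖M‖ ≤ c := by
  rw [Matrix.l2_opNorm_def]
  refine ContinuousLinearMap.opNorm_le_bound _ hc fun v => ?_
  have := h ((WithLp.equiv 2 (n → ℝ)) v)
  simpa [Matrix.toEuclideanLin_apply] using this

private lemma norm_kron_one_le {ι ϑ : Type*} [Fintype ι] [DecidableEq ι]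
    [Fintype ϑ] [DecidableEq ϑ] (X : Matrix ι ι ℝ) :
    ‖X ⊗ₖ (1 : Matrix ϑ ϑ ℝ)‖ ≤ ‖X‖ := by
  refine l2_norm_le_of_mulVec _ _ (norm_nonneg X) fun v => ?_
  have happ : ∀ i j, ((X ⊗ₖ (1 : Matrix ϑ ϑ ℝ)) *ᵥ v) (i, j)
      = (X *ᵥ fun k => v (k, j)) i := by
    intro i j
    simp [Matrix.mulVec, dotProduct, Fintype.sum_prod_type, Matrix.one_apply,
      ite_mul, mul_ite]
  have hcol : ∀ j, (∑ i, ((X ⊗ₖ (1 : Matrix ϑ ϑ ℝ)) *ᵥ v) (i, j) ^ 2)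
      ≤ ‖X‖ ^ 2 * ∑ k, v (k, j) ^ 2 := by
    intro j
    have h1 := X.l2_opNorm_mulVec ((WithLp.equiv 2 (ι → ℝ)).symm fun k => v (k, j))
    have h2 := pow_le_pow_left₀ (norm_nonneg _) h1 2
    rw [mul_pow] at h2
    simpa [euclid_norm_sq', happ] using h2
  have key : (∑ p : ι × ϑ, ((X ⊗ₖ (1 : Matrix ϑ ϑ ℝ)) *ᵥ v) p ^ 2)
      ≤ ‖X‖ ^ 2 * ∑ p : ι × ϑ, v p ^ 2 := by
    rw [Fintype.sum_prod_type_right, Fintype.sum_prod_type_right, Finset.mul_sum]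
    exact Finset.sum_le_sum fun j _ => hcol j
  have h0 : (0 : ℝ) ≤ ‖X‖ * ‖(WithLp.equiv 2 ((ι × ϑ) → ℝ)).symm v‖ := by positivity
  rw [← pow_le_pow_iff_left₀ (norm_nonneg _) h0 two_ne_zero, mul_pow,
    euclid_norm_sq, euclid_norm_sq]
  exact key

private lemma norm_one_kron_le {ι ϑ : Type*} [Fintype ι] [DecidableEq ι]
    [Fintype ϑ] [DecidableEq ϑ] (Y : Matrix ϑ ϑ ℝ) :
    ‖(1 : Matrix ι ι ℝ) ⊗ₖ Y‖ ≤ ‖Y‖ := by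
  refine l2_norm_le_of_mulVec _ _ (norm_nonneg Y) fun v => ?_
  have happ : ∀ i j, (((1 : Matrix ι ι ℝ) ⊗ₖ Y) *ᵥ v) (i, j)
      = (Y *ᵥ fun l => v (i, l)) j := by
    intro i j
    simp [Matrix.mulVec, dotProduct, Fintype.sum_prod_type, Matrix.one_apply,
      ite_mul, mul_ite]
  have hcol : ∀ i, (∑ j, (((1 : Matrix ι ι ℝ) ⊗ₖ Y) *ᵥ v) (i, j) ^ 2)
      ≤ ‖Y‖ ^ 2 * ∑ l, v (i, l) ^ 2 := by
    intro i
    have h1 := Y.l2_opNorm_mulVec ((WithLp.equiv 2 (ϑ → ℝ)).symm fun l => v (i, l))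
    have h2 := pow_le_pow_left₀ (norm_nonneg _) h1 2
    rw [mul_pow] at h2
    simpa [euclid_norm_sq', happ] using h2
  have key : (∑ p : ι × ϑ, (((1 : Matrix ι ι ℝ) ⊗ₖ Y) *ᵥ v) p ^ 2)
      ≤ ‖Y‖ ^ 2 * ∑ p : ι × ϑ, v p ^ 2 := by
    rw [Fintype.sum_prod_type, Fintype.sum_prod_type, Finset.mul_sum]
    exact Finset.sum_le_sum fun i _ => hcol i
  have h0 : (0 : ℝ) ≤ ‖Y‖ * ‖(WithLp.equiv 2 ((ι × ϑ) → ℝ)).symm v‖ := by positivity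
  rw [← pow_le_pow_iff_left₀ (norm_nonneg _) h0 two_ne_zero, mul_pow,
    euclid_norm_sq, euclid_norm_sq]
  exact key

private lemma kron_one_pow {ι ϑ : Type*} [Fintype ι] [DecidableEq ι]
    [Fintype ϑ] [DecidableEq ϑ] (X : Matrix ι ι ℝ) (k : ℕ) :
    (X ⊗ₖ (1 : Matrix ϑ ϑ ℝ)) ^ k = (X ^ k) ⊗ₖ (1 : Matrix ϑ ϑ ℝ) := by
  induction k with
  | zero => simp [Matrix.one_kronecker_one]
  | succ k ih => rw [pow_succ, ih, pow_succ, ← Matrix.mul_kronecker_mul, one_mul]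

private lemma one_kron_pow {ι ϑ : Type*} [Fintype ι] [DecidableEq ι]
    [Fintype ϑ] [DecidableEq ϑ] (Y : Matrix ϑ ϑ ℝ) (k : ℕ) :
    ((1 : Matrix ι ι ℝ) ⊗ₖ Y) ^ k = (1 : Matrix ι ι ℝ) ⊗ₖ (Y ^ k) := by
  induction k with
  | zero => simp [Matrix.one_kronecker_one]
  | succ k ih => rw [pow_succ, ih, pow_succ, ← Matrix.mul_kronecker_mul, one_mul]

/-- **Cauchy product of Neumann series under the Kronecker product.**
For `‖A‖ < 1` and `‖B‖ < 1` (ℓ² operator norms), `1 + A` and `1 + B` are invertible and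
`∑ (−1)^n • ∑_{p=0}^{n} A^p ⊗ₖ B^{n−p}` converges to `(1 + A)⁻¹ ⊗ₖ (1 + B)⁻¹`. -/
theorem kronecker_neumann_series {ι ϑ : Type*}
    [Fintype ι] [Nonempty ι] [DecidableEq ι]
    [Fintype ϑ] [Nonempty ϑ] [DecidableEq ϑ]
    (A : Matrix ι ι ℝ) (B : Matrix ϑ ϑ ℝ) (hA : ‖A‖ < 1) (hB : ‖B‖ < 1) :
    IsUnit (1 + A) ∧ IsUnit (1 + B) ∧
      HasSum
        (fun n : ℕ => (-1 : ℝ) ^ n •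
          ∑ p ∈ Finset.range (n + 1), (A ^ p) ⊗ₖ (B ^ (n - p)))
        ((1 + A)⁻¹ ⊗ₖ (1 + B)⁻¹) := by
  have hA' : ‖(-A : Matrix ι ι ℝ)‖ < 1 := by rwa [norm_neg]
  have hB' : ‖(-B : Matrix ϑ ϑ ℝ)‖ < 1 := by rwa [norm_neg]
  have hUA : IsUnit (1 + A) := by
    have := isUnit_one_sub_of_norm_lt_one hA'
    rwa [sub_neg_eq_add] at this
  have hUB : IsUnit (1 + B) := by
    have := isUnit_one_sub_of_norm_lt_one hB'
    rwa [sub_neg_eq_add] at this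
  refine ⟨hUA, hUB, ?_⟩
  set X : Matrix (ι × ϑ) (ι × ϑ) ℝ := (-A) ⊗ₖ (1 : Matrix ϑ ϑ ℝ) with hXdef
  set Y : Matrix (ι × ϑ) (ι × ϑ) ℝ := (1 : Matrix ι ι ℝ) ⊗ₖ (-B) with hYdef
  have hX : ‖X‖ < 1 := lt_of_le_of_lt (norm_kron_one_le _) hA'
  have hY : ‖Y‖ < 1 := lt_of_le_of_lt (norm_one_kron_le _) hB'
  have hXs : Summable fun n : ℕ => ‖X ^ n‖ :=
    (summable_geometric_of_lt_one (norm_nonneg X) hX).of_norm_bounded_eventually_nat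
      (by simpa using eventually_norm_pow_le X)
  have hYs : Summable fun n : ℕ => ‖Y ^ n‖ :=
    (summable_geometric_of_lt_one (norm_nonneg Y) hY).of_norm_bounded_eventually_nat
      (by simpa using eventually_norm_pow_le Y)
  have hmain := hasSum_sum_range_mul_of_summable_norm hXs hYs
  have hXsum : (∑' n : ℕ, X ^ n) = ((1 + A)⁻¹) ⊗ₖ (1 : Matrix ϑ ϑ ℝ) := by
    rw [geom_series_eq_inverse X hX]
    have h1 : (1 : Matrix (ι × ϑ) (ι × ϑ) ℝ) - X = (1 + A) ⊗ₖ (1 : Matrix ϑ ϑ ℝ) := by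
      rw [hXdef, show (-A : Matrix ι ι ℝ) = (-1 : ℝ) • A by simp, Matrix.smul_kronecker,
        neg_one_smul, sub_neg_eq_add, Matrix.add_kronecker, Matrix.one_kronecker_one]
    rw [h1, ← Matrix.nonsing_inv_eq_ringInverse, Matrix.inv_kronecker, inv_one]
  have hYsum : (∑' n : ℕ, Y ^ n) = (1 : Matrix ι ι ℝ) ⊗ₖ ((1 + B)⁻¹) := by
    rw [geom_series_eq_inverse Y hY]
    have h1 : (1 : Matrix (ι × ϑ) (ι × ϑ) ℝ) - Y = (1 : Matrix ι ι ℝ) ⊗ₖ (1 + B) := by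
      rw [hYdef, show (-B : Matrix ϑ ϑ ℝ) = (-1 : ℝ) • B by simp, Matrix.kronecker_smul,
        neg_one_smul, sub_neg_eq_add, Matrix.kronecker_add, Matrix.one_kronecker_one]
    rw [h1, ← Matrix.nonsing_inv_eq_ringInverse, Matrix.inv_kronecker, inv_one]
  rw [hXsum, hYsum, ← Matrix.mul_kronecker_mul, mul_one, one_mul] at hmain
  have hfun : (fun n : ℕ => ∑ k ∈ Finset.range (n + 1), X ^ k * Y ^ (n - k))
      = fun n : ℕ => (-1 : ℝ) ^ n •
          ∑ p ∈ Finset.range (n + 1), (A ^ p) ⊗ₖ (B ^ (n - p)) := by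
    funext n
    rw [Finset.smul_sum]
    refine Finset.sum_congr rfl fun k hk => ?_
    have hk' : k ≤ n := Nat.lt_succ_iff.mp (Finset.mem_range.mp hk)
    have e1 : (-A : Matrix ι ι ℝ) ^ k = ((-1 : ℝ) ^ k) • A ^ k := by
      rw [show (-A : Matrix ι ι ℝ) = (-1 : ℝ) • A by simp, smul_pow]
    have e2 : (-B : Matrix ϑ ϑ ℝ) ^ (n - k) = ((-1 : ℝ) ^ (n - k)) • B ^ (n - k) := by
      rw [show (-B : Matrix ϑ ϑ ℝ) = (-1 : ℝ) • B by simp, smul_pow]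
    rw [hXdef, hYdef, kron_one_pow, one_kron_pow, ← Matrix.mul_kronecker_mul, mul_one,
      one_mul, e1, e2, Matrix.smul_kronecker, Matrix.kronecker_smul, smul_smul, ← pow_add,
      Nat.add_sub_cancel' hk']
  rw [hfun] at hmain
  exact hmain
end
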